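/- arXiv:2206.05103 — 2 statements merged into one kernel-verified Lean document; each statement's English description precedes it below -/
import Mathlib

section
/- For any finite sequence p of length N embedded into an L×(N−L+1) Hankel matrix H_L(p), there exists a number d ≤ ⌊(N+1)/2⌋ (depending only on p, not on L) such that for every L with 1 ≤ L ≤ N, rank H_L(p) = min(L, N−L+1, d). -/
/-- The `L × K` Hankel matrix of a sequence `p` of length `N`, where `L + K = N + 1`:
entry `(i,j)` is `p (i + j)` (0-indexed, i.e. `p_{i+j-1}` in 1-indexed notation). -/
def hankel {α : Type*} {N : ℕ} (L K : ℕ) (h : L + K = N + 1) (p : Fin N → α) :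
    Matrix (Fin L) (Fin K) α :=
  Matrix.of fun i j => p ⟨i.val + j.val, by have hi := i.isLt; have hj := j.isLt; omega⟩

/-!
The rank profile `r L = rank H_L` is bounded by `L` and symmetric, since `H_Lᵀ = H_{N+1-L}`.
If `H_{L+1}` has a nonzero kernel `V`, then `V` padded by a trailing zero and `V` shifted by one
place both lie in the kernel of `H_L`, and the shifted copy is not contained in the padded one;
by rank–nullity `r L ≤ r (L + 1)`. These three properties alone force
`r L = min (min L (N + 1 - L)) (r ((N + 1) / 2))`.
-/

open Function Matrix

theorem eq_min_min_of_le_self_of_symm {r : ℕ → ℕ} {n : ℕ} (hle : ∀ L ≤ n, r L ≤ L)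
    (hsymm : ∀ L ≤ n, r (n - L) = r L)
    (hstep : ∀ L, L + 1 ≤ n → r (L + 1) < n - (L + 1) → r L ≤ r (L + 1)) :
    ∀ L ≤ n, r L = min (min L (n - L)) (r (n / 2)) := by
  have hstep_symm : ∀ L, L + 1 ≤ n → r L < L → r (L + 1) ≤ r L := by
    intro L hL hr
    have h := hstep (n - (L + 1)) (by omega) (by
      rw [show n - (L + 1) + 1 = n - L by omega, hsymm L (by omega)]; omega)
    rwa [show n - (L + 1) + 1 = n - L by omega, hsymm L (by omega), hsymm (L + 1) hL] at h
  have hmono : ∀ L m, L ≤ m → m ≤ n / 2 → r L ≤ r m := by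
    intro L m hLm
    induction m, hLm using Nat.le_induction with
    | base => exact fun _ => le_rfl
    | succ m _ ih =>
      intro hm
      refine (ih (by omega)).trans ?_
      by_cases hr : r (m + 1) < n - (m + 1)
      · exact hstep m (by omega) hr
      · exact (hle m (by omega)).trans (by omega)
  have hflat : ∀ L m, L ≤ m → m ≤ n / 2 → r L < L → r m ≤ r L := by
    intro L m hLm
    induction m, hLm using Nat.le_induction with
    | base => exact fun _ _ => le_rfl
    | succ m hLm ih =>
      intro hm hr
      have hrm := ih (by omega) hr
      exact (hstep_symm m (by omega) (by omega)).trans hrm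
  have hlow : ∀ L ≤ n / 2, r L = min L (r (n / 2)) := by
    intro L hL
    have := hmono L (n / 2) hL le_rfl
    rcases (hle L (by omega)).lt_or_eq with hr | hr
    · have := hflat L (n / 2) hL le_rfl hr
      omega
    · omega
  intro L hL
  by_cases hL2 : L ≤ n / 2
  · rw [hlow L hL2]; congr 1; omega
  · rw [← hsymm L hL, hlow (n - L) (by omega)]; congr 1; omega

theorem Submodule.eq_bot_of_map_succ_le_map_castSucc {R : Type*} [Semiring R] {K : ℕ}
    {V : Submodule R (Fin K → R)}
    (hV : V.map (ExtendByZero.linearMap R Fin.succ) ≤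
      V.map (ExtendByZero.linearMap R Fin.castSucc)) :
    V = ⊥ := by
  have hshift : ∀ v ∈ V, ∃ w ∈ V, ∀ j : Fin K,
      v j = if h : j.val + 1 < K then w ⟨j.val + 1, h⟩ else 0 := by
    intro v hv
    obtain ⟨w, hw, hwv⟩ := hV (Submodule.mem_map_of_mem hv)
    refine ⟨w, hw, fun j => ?_⟩
    have hj := congrFun hwv j.succ
    simp only [ExtendByZero.linearMap_apply, (Fin.succ_injective _).extend_apply] at hj
    split_ifs with h
    · rw [← hj, show j.succ = Fin.castSucc ⟨j.val + 1, h⟩ from Fin.ext rfl,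
        (Fin.castSucc_injective _).extend_apply]
    · rw [← hj, extend_apply']
      · rfl
      · rintro ⟨a, ha⟩
        have := congrArg Fin.val ha
        simp only [Fin.val_castSucc, Fin.val_succ] at this
        omega
  have hzero : ∀ n, ∀ v ∈ V, ∀ j : Fin K, K ≤ j.val + n + 1 → v j = 0 := by
    intro n
    induction n with
    | zero =>
      intro v hv j hj
      obtain ⟨w, -, hvw⟩ := hshift v hv
      rw [hvw, dif_neg (by omega)]
    | succ n ih =>
      intro v hv j hj
      obtain ⟨w, hw, hvw⟩ := hshift v hv
      rw [hvw]
      split_ifs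
      · exact ih w hw _ (by simp only; omega)
      · rfl
  rw [Submodule.eq_bot_iff]
  exact fun v hv => funext fun j => hzero K v hv j (by omega)

section

variable {α : Type*} {N L K : ℕ}

theorem hankel_transpose (h : L + K = N + 1) (h' : K + L = N + 1) (p : Fin N → α) :
    (hankel L K h p)ᵀ = hankel K L h' p := by
  ext i j
  simp only [hankel, transpose_apply, of_apply, Nat.add_comm]

variable {R : Type*} [NonUnitalNonAssocSemiring R]

theorem hankel_mulVec_extend_castSucc (h : L + (K + 1) = N + 1) (h' : L + 1 + K = N + 1)
    (p : Fin N → R) (v : Fin K → R) (i : Fin L) :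
    (hankel L (K + 1) h p *ᵥ extend Fin.castSucc v 0) i =
      (hankel (L + 1) K h' p *ᵥ v) i.castSucc := by
  simp only [mulVec, dotProduct, Fin.sum_univ_castSucc, (Fin.castSucc_injective _).extend_apply]
  rw [extend_apply']
  · simp [hankel]
  · rintro ⟨a, ha⟩
    exact Fin.castSucc_ne_last a ha

theorem hankel_mulVec_extend_succ (h : L + (K + 1) = N + 1) (h' : L + 1 + K = N + 1)
    (p : Fin N → R) (v : Fin K → R) (i : Fin L) :
    (hankel L (K + 1) h p *ᵥ extend Fin.succ v 0) i = (hankel (L + 1) K h' p *ᵥ v) i.succ := by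
  simp only [mulVec, dotProduct, Fin.sum_univ_succ, (Fin.succ_injective _).extend_apply]
  rw [extend_apply']
  · simp only [hankel, of_apply, Pi.zero_apply, mul_zero, zero_add]
    refine Finset.sum_congr rfl fun j _ => congrArg (· * v j) (congrArg p (Fin.ext ?_))
    simp only [Fin.val_succ]
    omega
  · rintro ⟨a, ha⟩
    exact Fin.succ_ne_zero a ha

variable {𝕜 : Type*} [Field 𝕜]

theorem rank_hankel_le_rank_hankel_succ (h : L + (K + 1) = N + 1) (h' : L + 1 + K = N + 1)
    (p : Fin N → 𝕜) (hr : (hankel (L + 1) K h' p).rank < K) :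
    (hankel L (K + 1) h p).rank ≤ (hankel (L + 1) K h' p).rank := by
  have e := LinearMap.finrank_range_add_finrank_ker (hankel (L + 1) K h' p).mulVecLin
  have e' := LinearMap.finrank_range_add_finrank_ker (hankel L (K + 1) h p).mulVecLin
  rw [Module.finrank_fin_fun] at e e'
  set V := LinearMap.ker (hankel (L + 1) K h' p).mulVecLin
  set V' := LinearMap.ker (hankel L (K + 1) h p).mulVecLin
  set ι₀ := ExtendByZero.linearMap 𝕜 (Fin.castSucc (n := K))
  set ι₁ := ExtendByZero.linearMap 𝕜 (Fin.succ (n := K))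
  have hV : V ≠ ⊥ := by
    intro hV
    rw [hV, finrank_bot] at e
    exact hr.ne e
  have h₀ : V.map ι₀ ≤ V' := by
    rintro _ ⟨v, hv, rfl⟩
    funext i
    exact (hankel_mulVec_extend_castSucc h h' p v i).trans (congrFun hv i.castSucc)
  have h₁ : V.map ι₁ ≤ V' := by
    rintro _ ⟨v, hv, rfl⟩
    funext i
    exact (hankel_mulVec_extend_succ h h' p v i).trans (congrFun hv i.succ)
  have hι₀ : Injective ι₀ := fun v w hvw => funext fun a => by
    simpa [ι₀, (Fin.castSucc_injective K).extend_apply] using congrFun hvw a.castSucc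
  have hlt : V.map ι₀ < V.map ι₀ ⊔ V.map ι₁ :=
    lt_of_le_of_ne le_sup_left fun heq =>
      hV (Submodule.eq_bot_of_map_succ_le_map_castSucc (heq ▸ le_sup_right))
  have hdim : Module.finrank 𝕜 V < Module.finrank 𝕜 V' := calc
    Module.finrank 𝕜 V = Module.finrank 𝕜 (V.map ι₀) :=
      (Submodule.equivMapOfInjective ι₀ hι₀ V).finrank_eq
    _ < Module.finrank 𝕜 (V.map ι₀ ⊔ V.map ι₁ : Submodule 𝕜 _) :=
      Submodule.finrank_lt_finrank_of_lt hlt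
    _ ≤ Module.finrank 𝕜 V' := Submodule.finrank_mono (sup_le h₀ h₁)
  unfold Matrix.rank
  omega

end

/-- For any finite complex sequence `p` of length `N ≥ 1`, there exists `d ≤ ⌊(N+1)/2⌋`
(depending only on `p`) such that for every window length `L` with `1 ≤ L ≤ N`,
`rank H_L(p) = min (L, N − L + 1, d)`. -/
theorem hankel_rank_plateau (N : ℕ) (p : Fin N → ℂ) :
    ∃ d : ℕ, d ≤ (N + 1) / 2 ∧
      ∀ (L : ℕ), 1 ≤ L → ∀ (hL : L ≤ N),
        (hankel L (N + 1 - L) (by omega) p).rank = min (min L (N + 1 - L)) d := by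
  let r : ℕ → ℕ := fun L =>
    if h : L ≤ N + 1 then (hankel L (N + 1 - L) (by omega) p).rank else 0
  have hr : ∀ L K (h : L + K = N + 1), r L = (hankel L K h p).rank := by
    intro L K h
    obtain rfl : K = N + 1 - L := by omega
    exact dif_pos (by omega)
  have hle : ∀ L ≤ N + 1, r L ≤ L := fun L hL =>
    (hr L (N + 1 - L) (by omega)).trans_le (rank_le_height _)
  have hsymm : ∀ L ≤ N + 1, r (N + 1 - L) = r L := fun L hL => by
    rw [hr _ L (by omega), hr L (N + 1 - L) (by omega), ← rank_transpose, hankel_transpose]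
  have hstep : ∀ L, L + 1 ≤ N + 1 → r (L + 1) < N + 1 - (L + 1) → r L ≤ r (L + 1) := by
    intro L hL hlt
    rw [hr (L + 1) (N - L) (by omega)] at hlt ⊢
    rw [hr L (N - L + 1) (by omega)]
    exact rank_hankel_le_rank_hankel_succ _ _ p (by omega)
  have hplateau := eq_min_min_of_le_self_of_symm hle hsymm hstep
  refine ⟨r ((N + 1) / 2), hle _ (Nat.div_le_self _ _), fun L _ hL => ?_⟩
  rw [← hr L _ (by omega)]
  exact hplateau L (by omega)
end

section
/- (Eckart–Young–Mirsky for Frobenius norm) Let A ∈ ℝ^{L×K} with singular value decomposition A = UΣVᵀ, singular values σ_1 ≥ ⋯ ≥ σ_{min(L,K)}. Let A^{(r)} = UΣ^{(r)}Vᵀ where Σ^{(r)} keeps only the top r singular values. Then for every matrix B with rank B ≤ r, ‖A − A^{(r)}‖_F ≤ ‖A − B‖_F. -/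
open Matrix

/-- The Frobenius norm of a real matrix. -/
noncomputable def frob {L K : ℕ} (X : Matrix (Fin L) (Fin K) ℝ) : ℝ :=
  Real.sqrt (∑ i, ∑ j, X i j ^ 2)

/-!
Both sides are invariant under `X ↦ Uᵀ X V`, which does not increase rank, so `A` may be taken
to be the rectangular diagonal matrix `Σ`. If `rank B ≤ r`, the kernel of `B` contains `K - r`
orthonormal vectors, the columns of some `W`; then
`‖Σ - B‖² ≥ ‖(Σ - B) W‖² = ‖Σ W‖² = ∑ₖ σₖ² pₖ` with `pₖ = ∑ⱼ W_{kj}² ∈ [0, 1]` (Bessel) and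
`∑ₖ pₖ = K - r`. As `σₖ²` is nonincreasing, such a weighted sum is at least the sum of the
`K - r` smallest weights, `∑_{k ≥ r} σₖ² = ‖Σ - Σ^{(r)}‖²`.
-/

noncomputable def frobSq {m n : Type*} [Fintype m] [Fintype n] (X : Matrix m n ℝ) : ℝ :=
  ∑ i, ∑ j, X i j ^ 2

section FrobeniusSq

variable {m n : Type*} [Fintype m] [Fintype n]

lemma frobSq_eq_trace (X : Matrix m n ℝ) : frobSq X = (Xᵀ * X).trace := by
  simp only [frobSq, trace, diag, mul_apply, transpose_apply, sq]
  exact Finset.sum_comm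

lemma frobSq_transpose (X : Matrix m n ℝ) : frobSq Xᵀ = frobSq X :=
  Finset.sum_comm

lemma frobSq_orthogonal_mul [DecidableEq m] {U : Matrix m m ℝ} (hU : Uᵀ * U = 1)
    (X : Matrix m n ℝ) : frobSq (U * X) = frobSq X := by
  rw [frobSq_eq_trace, frobSq_eq_trace, transpose_mul, Matrix.mul_assoc, ← Matrix.mul_assoc Uᵀ,
    hU, Matrix.one_mul]

lemma frobSq_orthogonal_mul_mul_transpose [DecidableEq m] [DecidableEq n] {U : Matrix m m ℝ}
    {V : Matrix n n ℝ} (hU : Uᵀ * U = 1) (hV : Vᵀ * V = 1) (X : Matrix m n ℝ) :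
    frobSq (U * X * Vᵀ) = frobSq X := by
  rw [Matrix.mul_assoc, frobSq_orthogonal_mul hU, ← frobSq_transpose, transpose_mul,
    transpose_transpose, frobSq_orthogonal_mul hV, frobSq_transpose]

omit [Fintype n] in
lemma gram_toLp_transpose (W : Matrix m n ℝ) :
    gram ℝ (fun j => WithLp.toLp 2 (Wᵀ j)) = Wᵀ * W := by
  ext i j
  simp [gram_apply, mul_apply, PiLp.inner_apply, mul_comm]

lemma sum_sq_vecMul_le [DecidableEq n] {W : Matrix m n ℝ} (hW : Wᵀ * W = 1) (x : m → ℝ) :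
    ∑ j, (x ᵥ* W) j ^ 2 ≤ ∑ i, x i ^ 2 := by
  have hcols : Orthonormal ℝ fun j => WithLp.toLp 2 (Wᵀ j) := by
    rw [← gram_eq_one_iff_orthonormal, gram_toLp_transpose, hW]
  have hbessel := hcols.sum_inner_products_le (WithLp.toLp 2 x) (s := Finset.univ)
  simpa [EuclideanSpace.real_norm_sq_eq, PiLp.inner_apply, vecMul, dotProduct, mul_comm]
    using hbessel

lemma frobSq_mul_le [DecidableEq n] {l : Type*} [Fintype l] {W : Matrix m n ℝ}
    (hW : Wᵀ * W = 1) (X : Matrix l m ℝ) : frobSq (X * W) ≤ frobSq X :=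
  Finset.sum_le_sum fun i _ => sum_sq_vecMul_le hW (X i)

lemma sum_sq_row_le_one [DecidableEq m] [DecidableEq n] {W : Matrix m n ℝ} (hW : Wᵀ * W = 1)
    (i : m) : ∑ j, W i j ^ 2 ≤ 1 := by
  simpa [single_one_vecMul, Pi.single_apply] using sum_sq_vecMul_le hW (Pi.single i 1)

end FrobeniusSq

lemma exists_orthonormal_ker_of_rank_le {m n : Type*} [Fintype n]
    {r : ℕ} {B : Matrix m n ℝ} (hB : B.rank ≤ r) :
    ∃ v : Fin (Fintype.card n - r) → EuclideanSpace ℝ n,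
      Orthonormal ℝ v ∧ ∀ j, B *ᵥ (v j).ofLp = 0 := by
  let f := B.mulVecLin ∘ₗ (WithLp.linearEquiv 2 ℝ (n → ℝ)).toLinearMap
  have hrange : LinearMap.range f = LinearMap.range B.mulVecLin :=
    LinearMap.range_comp_of_range_eq_top _ (LinearEquiv.range _)
  have hdim : Fintype.card n - r ≤ Module.finrank ℝ (LinearMap.ker f) := by
    have := LinearMap.finrank_range_add_finrank_ker f
    rw [finrank_euclideanSpace, hrange] at this
    change Module.finrank ℝ (LinearMap.range B.mulVecLin) ≤ r at hB
    omega
  let b := stdOrthonormalBasis ℝ (LinearMap.ker f)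
  refine ⟨(LinearMap.ker f).subtypeₗᵢ ∘ b ∘ Fin.castLE hdim, ?_, fun j => ?_⟩
  · exact (b.orthonormal.comp _ (Fin.castLE_injective hdim)).comp_linearIsometry _
  · exact (b (Fin.castLE hdim j)).2

lemma exists_orthonormal_cols_mul_eq_zero {m n : Type*} [Fintype n] [DecidableEq n]
    {r : ℕ} {B : Matrix m n ℝ} (hB : B.rank ≤ r) :
    ∃ W : Matrix n (Fin (Fintype.card n - r)) ℝ, Wᵀ * W = 1 ∧ B * W = 0 := by
  obtain ⟨v, hv, hBv⟩ := exists_orthonormal_ker_of_rank_le hB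
  refine ⟨(of fun j => (v j).ofLp)ᵀ, ?_, ?_⟩
  · rw [← gram_toLp_transpose]
    exact gram_eq_one_iff_orthonormal.mpr hv
  · ext i j
    exact congrFun (hBv j) i

lemma sum_ite_le_sum_mul_of_antitone {K r : ℕ} {w p : Fin K → ℝ} (hw : Antitone w)
    (hp0 : ∀ k, 0 ≤ p k) (hp1 : ∀ k, p k ≤ 1) (hp : ∑ k, p k = (K - r : ℕ)) :
    ∑ k : Fin K, (if r ≤ (k : ℕ) then w k else 0) ≤ ∑ k, w k * p k := by
  rcases lt_or_ge r K with hrK | hKr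
  · let t := w ⟨r, hrK⟩
    have hcount : ∑ k : Fin K, (if r ≤ (k : ℕ) then (1 : ℝ) else 0) = (K - r : ℕ) := by
      rw [Finset.sum_boole, ← Fin.card_Ici ⟨r, hrK⟩]
      congr 2
      ext k
      simp [Fin.le_def]
    -- `(w k - t) * ([r ≤ k] - p k) ≥ 0` for the threshold `t = w r`, and the `t`-terms sum to zero.
    have hpointwise : ∀ k : Fin K, (if r ≤ (k : ℕ) then w k else 0)
        ≤ w k * p k + t * ((if r ≤ (k : ℕ) then 1 else 0) - p k) := by
      intro k
      split_ifs with hk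
      · nlinarith [hw (show (⟨r, hrK⟩ : Fin K) ≤ k from hk), hp1 k]
      · nlinarith [hw (show k ≤ ⟨r, hrK⟩ from Fin.le_def.mpr (show (k : ℕ) ≤ r by omega)), hp0 k]
    calc _ ≤ ∑ k, (w k * p k + t * ((if r ≤ (k : ℕ) then 1 else 0) - p k)) :=
          Finset.sum_le_sum fun k _ => hpointwise k
      _ = ∑ k, w k * p k := by
          rw [Finset.sum_add_distrib, ← Finset.mul_sum, Finset.sum_sub_distrib, hcount, hp]
          ring
  · have hp_zero : ∀ k, p k = 0 := by
      rw [Nat.sub_eq_zero_of_le hKr, Nat.cast_zero,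
        Finset.sum_eq_zero_iff_of_nonneg fun k _ => hp0 k] at hp
      exact fun k => hp k (Finset.mem_univ k)
    simp [hp_zero, show ∀ k : Fin K, ¬ r ≤ (k : ℕ) by omega]

def rectDiagonal (L K : ℕ) (σ : ℕ → ℝ) : Matrix (Fin L) (Fin K) ℝ :=
  of fun i j => if (i : ℕ) = (j : ℕ) then σ i else 0

section RectDiagonal

variable {L K : ℕ} (σ : ℕ → ℝ)

lemma rectDiagonal_transpose_mul_self :
    (rectDiagonal L K σ)ᵀ * rectDiagonal L K σ =
      diagonal fun k : Fin K => if (k : ℕ) < L then σ k ^ 2 else 0 := by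
  ext a b
  simp only [rectDiagonal, mul_apply, transpose_apply, of_apply, diagonal_apply]
  by_cases ha : (a : ℕ) < L
  · rw [Finset.sum_eq_single ⟨a, ha⟩]
    · by_cases hab : a = b
      · subst hab
        simp [ha, sq]
      · simp [hab, Fin.val_ne_of_ne hab]
    · intro i _ hi
      simp [show (i : ℕ) ≠ a from fun h => hi (Fin.ext h)]
    · simp
  · rw [Finset.sum_eq_zero fun i _ => by simp [show (i : ℕ) ≠ a by omega]]
    simp [ha]

lemma rectDiagonal_sub_truncation (r : ℕ) :
    rectDiagonal L K σ - rectDiagonal L K (fun n => if n < r then σ n else 0) =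
      rectDiagonal L K fun n => if r ≤ n then σ n else 0 := by
  ext i j
  by_cases hij : (i : ℕ) = j
  · by_cases hr : (j : ℕ) < r <;> simp [rectDiagonal, hij, hr, le_of_not_gt]
  · simp [rectDiagonal, hij]

lemma frobSq_rectDiagonal_mul {n : Type*} [Fintype n] (X : Matrix (Fin K) n ℝ) :
    frobSq (rectDiagonal L K σ * X) =
      ∑ k : Fin K, (if (k : ℕ) < L then σ k ^ 2 else 0) * ∑ j, X k j ^ 2 := by
  rw [frobSq_eq_trace, transpose_mul, Matrix.mul_assoc, ← Matrix.mul_assoc _ _ X,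
    rectDiagonal_transpose_mul_self]
  simp only [trace, diag, mul_apply (M := Xᵀ), diagonal_mul, transpose_apply, Finset.mul_sum]
  rw [Finset.sum_comm]
  exact Finset.sum_congr rfl fun k _ => Finset.sum_congr rfl fun j _ => by ring

lemma frobSq_rectDiagonal :
    frobSq (rectDiagonal L K σ) = ∑ k : Fin K, if (k : ℕ) < L then σ k ^ 2 else 0 := by
  simpa [one_apply] using frobSq_rectDiagonal_mul σ (1 : Matrix (Fin K) (Fin K) ℝ)

end RectDiagonal

lemma frobSq_rectDiagonal_tail_le {L K r : ℕ} {σ : ℕ → ℝ} (hσ : Antitone σ)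
    (hσ_nonneg : ∀ n, 0 ≤ σ n) {B : Matrix (Fin L) (Fin K) ℝ} (hB : B.rank ≤ r) :
    frobSq (rectDiagonal L K fun n => if r ≤ n then σ n else 0) ≤
      frobSq (rectDiagonal L K σ - B) := by
  obtain ⟨W, hW, hBW⟩ := exists_orthonormal_cols_mul_eq_zero hB
  let w : Fin K → ℝ := fun k => if (k : ℕ) < L then σ k ^ 2 else 0
  have hw : Antitone w := by
    intro a b hab
    simp only [w]
    split_ifs with hb ha ha
    · exact pow_le_pow_left₀ (hσ_nonneg _) (hσ hab) 2
    · exact absurd ((Fin.le_def.mp hab).trans_lt hb) ha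
    · positivity
    · rfl
  have hW_sum : ∑ k, ∑ j, W k j ^ 2 = (K - r : ℕ) := by
    rw [← frobSq, frobSq_eq_trace, hW, trace_one]
    simp
  calc frobSq (rectDiagonal L K fun n => if r ≤ n then σ n else 0)
      = ∑ k : Fin K, if r ≤ (k : ℕ) then w k else 0 := by
        rw [frobSq_rectDiagonal]
        refine Finset.sum_congr rfl fun k _ => ?_
        split_ifs <;> simp_all [w]
    _ ≤ ∑ k, w k * ∑ j, W k j ^ 2 :=
        sum_ite_le_sum_mul_of_antitone hw (fun k => by positivity) (sum_sq_row_le_one hW) hW_sum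
    _ = frobSq (rectDiagonal L K σ * W) := (frobSq_rectDiagonal_mul σ W).symm
    _ = frobSq ((rectDiagonal L K σ - B) * W) := by rw [Matrix.sub_mul, hBW, sub_zero]
    _ ≤ frobSq (rectDiagonal L K σ - B) := frobSq_mul_le hW _

/-- Eckart–Young–Mirsky theorem for the Frobenius norm: if `A = U Σ Vᵀ` is a singular
value decomposition (with `U, V` orthogonal and `σ` nonincreasing and nonnegative), then
the truncation `A^{(r)} = U Σ^{(r)} Vᵀ` keeping the top `r` singular values satisfies
`‖A − A^{(r)}‖_F ≤ ‖A − B‖_F` for every matrix `B` of rank at most `r`. -/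
theorem eckart_young_mirsky_frobenius (L K r : ℕ) (A : Matrix (Fin L) (Fin K) ℝ)
    (U : Matrix (Fin L) (Fin L) ℝ) (V : Matrix (Fin K) (Fin K) ℝ)
    (hU : Uᵀ * U = 1) (hV : Vᵀ * V = 1)
    (σ : ℕ → ℝ) (hmono : Antitone σ) (hnonneg : ∀ i, 0 ≤ σ i)
    (hA : A = U * (Matrix.of fun (i : Fin L) (j : Fin K) =>
      if (i : ℕ) = (j : ℕ) then σ (i : ℕ) else 0) * Vᵀ)
    (B : Matrix (Fin L) (Fin K) ℝ) (hB : B.rank ≤ r) :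
    frob (A - U * (Matrix.of fun (i : Fin L) (j : Fin K) =>
        if (i : ℕ) = (j : ℕ) ∧ (i : ℕ) < r then σ (i : ℕ) else 0) * Vᵀ) ≤
      frob (A - B) := by
  have hA' : A = U * rectDiagonal L K σ * Vᵀ := hA
  have hUU : U * Uᵀ = 1 := mul_eq_one_comm.mp hU
  have hVV : V * Vᵀ = 1 := mul_eq_one_comm.mp hV
  have htrunc : (of fun (i : Fin L) (j : Fin K) =>
      if (i : ℕ) = (j : ℕ) ∧ (i : ℕ) < r then σ (i : ℕ) else 0) =
      rectDiagonal L K fun n => if n < r then σ n else 0 := by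
    ext i j
    by_cases hij : (i : ℕ) = j <;> simp [rectDiagonal, hij]
  have hresidual : A - U * (of fun (i : Fin L) (j : Fin K) =>
      if (i : ℕ) = (j : ℕ) ∧ (i : ℕ) < r then σ (i : ℕ) else 0) * Vᵀ =
      U * rectDiagonal L K (fun n => if r ≤ n then σ n else 0) * Vᵀ := by
    rw [hA', htrunc, ← Matrix.sub_mul, ← Matrix.mul_sub, rectDiagonal_sub_truncation]
  have hdiff : A - B = U * (rectDiagonal L K σ - Uᵀ * B * V) * Vᵀ := by
    rw [Matrix.mul_sub, Matrix.sub_mul, hA', ← Matrix.mul_assoc U, ← Matrix.mul_assoc U, hUU,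
      Matrix.one_mul, Matrix.mul_assoc B, hVV, Matrix.mul_one]
  have hrank : (Uᵀ * B * V).rank ≤ r :=
    (rank_mul_le_left _ _).trans ((rank_mul_le_right _ _).trans hB)
  apply Real.sqrt_le_sqrt
  rw [← frobSq, ← frobSq, hresidual, hdiff, frobSq_orthogonal_mul_mul_transpose hU hV,
    frobSq_orthogonal_mul_mul_transpose hU hV]
  exact frobSq_rectDiagonal_tail_le hmono hnonneg hrank
end
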